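/- Let Λ ⊆ Γ ⊂ ℤⁿ be finite sets, let c ∈ ℂ^Λ be a nonzero coefficient vector with associated trigonometric polynomial ψ and zero set S. Then for any N and any points x₁, …, x_N ∈ S, the Γ-feature matrix satisfies rank(Φ_Γ(x₁,…,x_N)) ≤ |Γ| − |Γ:Λ|, where |Γ:Λ| is the number of shifts d ∈ ℤⁿ with Λ + d ⊆ Γ. -/

import Mathlib

open Complex
open scoped Real

/-- The exponential feature map `φ_Λ : ℝⁿ → ℂ^Λ`, `(φ_Λ(x))_k = exp(2πi⟨k,x⟩)`. -/
noncomputable def phiMap {n : ℕ} (Λ : Finset (Fin n → ℤ)) (x : Fin n → ℝ) : Λ → ℂ :=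
  fun k => Complex.exp (2 * Real.pi * Complex.I * (∑ i, (k.1 i : ℝ) * x i))

/-- The `|Λ| × N` feature matrix whose `j`-th column is `φ_Λ(x_j)`. -/
noncomputable def featureMatrix {n : ℕ} {J : Type} [Fintype J] (Λ : Finset (Fin n → ℤ))
    (x : J → Fin n → ℝ) : Matrix Λ J ℂ :=
  Matrix.of fun k j => phiMap Λ (x j) k

/-- The trigonometric polynomial `ψ(x) = Σ_{k∈Λ} c_k exp(2πi⟨k,x⟩)`. -/
noncomputable def trigPoly {n : ℕ} (Λ : Finset (Fin n → ℤ)) (c : Λ → ℂ) (x : Fin n → ℝ) : ℂ :=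
  ∑ k, c k * phiMap Λ x k

/-- The zero set `S = {x ∈ [0,1)ⁿ : ψ(x) = 0}`. -/
def zeroSet {n : ℕ} (Λ : Finset (Fin n → ℤ)) (c : Λ → ℂ) : Set (Fin n → ℝ) :=
  {x | (∀ i, 0 ≤ x i ∧ x i < 1) ∧ trigPoly Λ c x = 0}

open Matrix

/-- Extension of coefficients by zero. -/
noncomputable def extCoef {n : ℕ} (Λ : Finset (Fin n → ℤ)) (c : Λ → ℂ) : (Fin n → ℤ) → ℂ :=
  fun k => if h : k ∈ Λ then c ⟨k, h⟩ else 0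

lemma shiftsLI {n : ℕ} (Λ Γ : Finset (Fin n → ℤ)) (c : Λ → ℂ) (hc : c ≠ 0)
    (D : Set (Fin n → ℤ)) (hD : ∀ d ∈ D, ∀ k ∈ Λ, k + d ∈ Γ) :
    LinearIndependent ℂ (fun d : D => (fun k : Γ => extCoef Λ c ((k : Fin n → ℤ) - d) : Γ → ℂ)) := by
  haveI : WellFoundedLT (Fin n) := Finite.to_wellFoundedLT
  rw [linearIndependent_iff']
  intro s g hsum
  by_contra hex
  push_neg at hex
  obtain ⟨i0, hi0s, hi0⟩ := hex
  set t := s.filter (fun i => g i ≠ 0) with ht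
  have htne : t.Nonempty := ⟨i0, Finset.mem_filter.mpr ⟨hi0s, hi0⟩⟩
  obtain ⟨d0, hd0t, hd0max⟩ := t.exists_max_image (fun i => toLex (i : Fin n → ℤ)) htne
  -- maximal support element of c
  have hcne : ∃ a : Λ, c a ≠ 0 := by
    by_contra h
    push_neg at h
    exact hc (funext fun a => h a)
  obtain ⟨a, ha⟩ := hcne
  set T := Λ.filter (fun k => extCoef Λ c k ≠ 0) with hT
  have hTne : T.Nonempty := by
    refine ⟨a.1, Finset.mem_filter.mpr ⟨a.2, ?_⟩⟩
    simpa [extCoef, a.2] using ha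
  obtain ⟨k0, hk0T, hk0max⟩ := T.exists_max_image toLex hTne
  have hk0Λ : k0 ∈ Λ := (Finset.mem_filter.mp hk0T).1
  have hk0ne : extCoef Λ c k0 ≠ 0 := (Finset.mem_filter.mp hk0T).2
  have hKΓ : k0 + (d0 : Fin n → ℤ) ∈ Γ := hD d0 d0.2 k0 hk0Λ
  have heval := congrFun hsum (⟨k0 + (d0 : Fin n → ℤ), hKΓ⟩ : Γ)
  simp only [Finset.sum_apply, Pi.smul_apply, smul_eq_mul, Pi.zero_apply] at heval
  have hsingle : ∑ i ∈ s, g i * extCoef Λ c (k0 + (d0 : Fin n → ℤ) - i) =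
      g d0 * extCoef Λ c k0 := by
    rw [Finset.sum_eq_single d0]
    · have h4 : k0 + (d0 : Fin n → ℤ) - d0 = k0 := by abel
      rw [h4]
    · intro i his hine
      by_cases hgi : g i = 0
      · simp [hgi]
      have hit : i ∈ t := Finset.mem_filter.mpr ⟨his, hgi⟩
      have hlt : toLex (i : Fin n → ℤ) < toLex (d0 : Fin n → ℤ) := by
        refine lt_of_le_of_ne (hd0max i hit) ?_
        intro h
        exact hine (Subtype.ext (toLex.injective h))
      have hz : extCoef Λ c (k0 + (d0 : Fin n → ℤ) - i) = 0 := by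
        by_contra hnz
        have hmem : k0 + (d0 : Fin n → ℤ) - i ∈ Λ := by
          by_contra h
          exact hnz (dif_neg h)
        have hmemT : k0 + (d0 : Fin n → ℤ) - i ∈ T := Finset.mem_filter.mpr ⟨hmem, hnz⟩
        have hle := hk0max _ hmemT
        have hpos : (0 : Lex (Fin n → ℤ)) < toLex ((d0 : Fin n → ℤ) - i) := by
          have h5 := sub_pos.mpr hlt
          exact h5
        have h6 : toLex k0 < toLex (k0 + ((d0 : Fin n → ℤ) - i)) :=
          lt_add_of_pos_right (toLex k0) hpos
        have heq : k0 + (d0 : Fin n → ℤ) - i = k0 + ((d0 : Fin n → ℤ) - i) := by abel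
        rw [heq] at hle
        exact absurd (lt_of_lt_of_le h6 hle) (lt_irrefl _)
      simp [hz]
    · intro h
      exact absurd (Finset.filter_subset _ _ hd0t) h
  rw [hsingle] at heval
  have hg0 : g d0 = 0 := by
    rcases mul_eq_zero.mp heval with h | h
    · exact h
    · exact absurd h hk0ne
  exact (Finset.mem_filter.mp hd0t).2 hg0

/-- For `Λ ⊆ Γ` and any points `x₁,…,x_N ∈ S`, the `Γ`-feature matrix
satisfies `rank Φ_Γ(X) ≤ |Γ| − |Γ:Λ|`, where `|Γ:Λ|` is the number of shifts `d ∈ ℤⁿ`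
with `Λ + d ⊆ Γ`. -/
theorem statement9 {n N : ℕ} (Λ Γ : Finset (Fin n → ℤ)) (hΛΓ : Λ ⊆ Γ)
    (c : Λ → ℂ) (hc : c ≠ 0)
    (x : Fin N → Fin n → ℝ) (hx : ∀ j, x j ∈ zeroSet Λ c) :
    (featureMatrix Γ x).rank ≤ Γ.card - {d : Fin n → ℤ | ∀ k ∈ Λ, k + d ∈ Γ}.ncard := by
  classical
  set D : Set (Fin n → ℤ) := {d | ∀ k ∈ Λ, k + d ∈ Γ} with hDdef
  -- Λ is nonempty
  have hΛne : Λ.Nonempty := by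
    by_contra h
    rw [Finset.not_nonempty_iff_eq_empty] at h
    apply hc
    funext a
    exact absurd a.2 (by simp [h])
  obtain ⟨k₁, hk₁⟩ := hΛne
  -- D is finite
  have hDfin : D.Finite := by
    apply Set.Finite.subset ((Γ : Set (Fin n → ℤ)).toFinite.image (fun g => g - k₁))
    intro d hd
    exact ⟨k₁ + d, hd k₁ hk₁, add_sub_cancel_left k₁ d⟩
  haveI : Fintype D := hDfin.fintype
  set A := featureMatrix Γ x with hA
  set L := (Aᵀ).mulVecLin with hL
  -- kernel membership
  set v : D → (Γ → ℂ) := fun d => (fun k : Γ => extCoef Λ c ((k : Fin n → ℤ) - d)) with hv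
  have hker : ∀ d : D, v d ∈ LinearMap.ker L := by
    intro d
    rw [LinearMap.mem_ker]
    funext j
    show (Aᵀ.mulVec (v d)) j = 0
    set E : (Fin n → ℤ) → ℂ :=
      fun k => Complex.exp (2 * Real.pi * Complex.I * (∑ i, (k i : ℝ) * x j i)) with hEdef
    have h1 : (Aᵀ.mulVec (v d)) j = ∑ k : Γ, E (k : Fin n → ℤ) * extCoef Λ c ((k : Fin n → ℤ) - d) := by
      simp only [Matrix.mulVec, dotProduct, Matrix.transpose_apply, hA,
        featureMatrix, Matrix.of_apply, phiMap, hv, hEdef]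
    rw [h1]
    rw [Finset.sum_coe_sort Γ (fun k => E k * extCoef Λ c (k - d))]
    have hsub : Λ.image (· + (d : Fin n → ℤ)) ⊆ Γ := by
      intro k hk
      obtain ⟨l, hl, rfl⟩ := Finset.mem_image.mp hk
      exact d.2 l hl
    rw [← Finset.sum_subset hsub (by
      intro k hkΓ hknot
      have hz : extCoef Λ c (k - d) = 0 := by
        apply dif_neg
        intro h
        exact hknot (Finset.mem_image.mpr ⟨k - d, h, by abel⟩)
      simp [hz])]
    rw [Finset.sum_image (fun a _ b _ h => by simpa using add_left_injective (d : Fin n → ℤ) h)]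
    have h2 : ∀ l ∈ Λ, E (l + (d : Fin n → ℤ)) * extCoef Λ c (l + (d : Fin n → ℤ) - d) =
        (E l * extCoef Λ c l) * E (d : Fin n → ℤ) := by
      intro l hl
      have hl2 : l + (d : Fin n → ℤ) - d = l := by abel
      rw [hl2]
      have hEmul : E (l + (d : Fin n → ℤ)) = E l * E (d : Fin n → ℤ) := by
        rw [hEdef]
        simp only
        rw [← Complex.exp_add]
        congr 1
        push_cast
        rw [← mul_add, ← Finset.sum_add_distrib]
        congr 1
        apply Finset.sum_congr rfl
        intro i _
        simp only [Pi.add_apply]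
        push_cast
        ring
      rw [hEmul]
      ring
    rw [Finset.sum_congr rfl h2, ← Finset.sum_mul]
    have h3 : ∑ l ∈ Λ, E l * extCoef Λ c l = trigPoly Λ c (x j) := by
      rw [trigPoly, ← Finset.sum_coe_sort Λ (fun l => E l * extCoef Λ c l)]
      apply Finset.sum_congr rfl
      intro l _
      simp only [extCoef, l.2, dif_pos]
      rw [phiMap]
      ring
    rw [h3, (hx j).2, zero_mul]
  -- linear independence
  have hLI := shiftsLI Λ Γ c hc D (fun d hd => hd)
  have hLI2 : LinearIndependent ℂ (fun d : D =>
      (⟨v d, hker d⟩ : LinearMap.ker L)) := by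
    apply LinearIndependent.of_comp (LinearMap.ker L).subtype
    exact hLI
  have hcard : D.ncard ≤ Module.finrank ℂ (LinearMap.ker L) := by
    have h7 := hLI2.fintype_card_le_finrank
    rwa [← Nat.card_coe_set_eq, Nat.card_eq_fintype_card]
  have hrn := LinearMap.finrank_range_add_finrank_ker L
  have hfr : Module.finrank ℂ (↥Γ → ℂ) = Γ.card := by
    rw [Module.finrank_pi]
    exact Fintype.card_coe Γ
  rw [hfr] at hrn
  have hrank : A.rank = Module.finrank ℂ (LinearMap.range L) := by
    rw [← Matrix.rank_transpose A]
    rfl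
  rw [hrank]
  omega
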